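/- Let (a_n)_{n≥1} be a strictly increasing sequence of positive reals with a_n / log n → ∞ and a_{n+1} − a_n ≥ n^{−C} for some C > 0 for all large n. Fix k ≥ 2, A > 0, J = [A, A+1], η > 0, and 1 ≤ ℓ ≤ 2k. Then there is a constant c > 0 such that: for every u = (u₁,…,u_ℓ) ∈ (ℤ∖{0})^ℓ and every t = (t₁,…,t_ℓ) ∈ ℕ^ℓ with t₁ < ⋯ < t_ℓ, and every α ∈ J, writing φ(α) = ∑_{i=1}^ℓ uᵢ e^{α a_{tᵢ}}, one has max_{1 ≤ i ≤ ℓ} |φ^{(i)}(α)| ≥ c · t_ℓ^η. -/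

import Mathlib

/-!
Put `n = t_ℓ`, `bⱼ = a_{tⱼ}` and `wⱼ = uⱼ e^{α bⱼ}`, so that `φ^{(i)}(α) = ∑ⱼ wⱼ bⱼ^i`. Pairing
the derivatives with the coefficients of `Q = ∏_{j < ℓ} (X - bⱼ)` kills every exponential but the
top one: `∑ᵢ Q.coeff i · φ^{(i+1)}(α) = w_ℓ b_ℓ Q(b_ℓ)`. The nodes `bⱼ` (`j < ℓ`) lie below
`a_{n-1}`, so `Q(b_ℓ) ≥ (a_n - a_{n-1})^{ℓ-1}`, while the coefficients of `Q` are at most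
`(1 + a_n)^{ℓ-1}`. Hence some derivative is at least
`a_n (a_n - a_{n-1})^{ℓ-1} e^{A a_n} / (ℓ (1 + a_n)^{ℓ-1})`. The gap condition bounds
`(a_n - a_{n-1})^{ℓ-1}` below by `n^{-C(ℓ-1)}`, and `a_n / log n → ∞` lets `e^{A a_n}` absorb any
power of `n` and of `a_n`.
-/

open Filter Set Polynomial Asymptotics

theorem Polynomial.sum_range_coeff_mul_sum_pow {R ι : Type*} [CommSemiring R] {P : R[X]} {N : ℕ}
    (hN : P.natDegree < N) (s : Finset ι) (w b : ι → R) :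
    ∑ i ∈ Finset.range N, P.coeff i * ∑ j ∈ s, w j * b j ^ i = ∑ j ∈ s, w j * P.eval (b j) := by
  simp only [Finset.mul_sum, eval_eq_sum_range' hN]
  rw [Finset.sum_comm]
  exact Finset.sum_congr rfl fun j _ => Finset.sum_congr rfl fun i _ => by ring

theorem abs_coeff_prod_X_sub_C_le {ι : Type*} (s : Finset ι) (r : ι → ℝ) (i : ℕ) :
    |(∏ j ∈ s, (X - C (r j))).coeff i| ≤ ∏ j ∈ s, (1 + |r j|) := by
  classical
  induction s using Finset.induction generalizing i with
  | empty => rw [Finset.prod_empty, Finset.prod_empty, coeff_one]; split_ifs <;> simp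
  | insert j s hj ih =>
    rw [Finset.prod_insert hj, Finset.prod_insert hj, sub_mul, coeff_sub, coeff_C_mul]
    have hX : |(X * ∏ j ∈ s, (X - C (r j))).coeff i| ≤ ∏ j ∈ s, (1 + |r j|) := by
      cases i with
      | zero => rw [coeff_X_mul_zero, abs_zero]; positivity
      | succ i => rw [coeff_X_mul]; exact ih i
    calc _ ≤ |(X * ∏ j ∈ s, (X - C (r j))).coeff i| +
          |r j| * |(∏ j ∈ s, (X - C (r j))).coeff i| := by rw [← abs_mul]; exact abs_sub _ _
      _ ≤ (1 + |r j|) * ∏ j ∈ s, (1 + |r j|) := by rw [add_mul, one_mul]; gcongr; exact ih i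

theorem exists_abs_sum_mul_pow_ge {ι : Type*} [Fintype ι] [DecidableEq ι] (w b : ι → ℝ) (j₀ : ι)
    {δ R : ℝ} (hδ : 0 ≤ δ) (hsep : ∀ j ≠ j₀, δ ≤ |b j₀ - b j|) (hR : ∀ j ≠ j₀, |b j| ≤ R) :
    ∃ i < Fintype.card ι, |w j₀ * b j₀| * δ ^ (Fintype.card ι - 1) ≤
      Fintype.card ι * (1 + R) ^ (Fintype.card ι - 1) * |∑ j, w j * b j ^ (i + 1)| := by
  set m := Fintype.card ι
  set s := Finset.univ.erase j₀
  set S : ℕ → ℝ := fun i => ∑ j, w j * b j ^ (i + 1)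
  have hs : s.card = m - 1 := by rw [Finset.card_erase_of_mem (Finset.mem_univ _), Finset.card_univ]
  have hm : 0 < m := Fintype.card_pos_iff.2 ⟨j₀⟩
  set Q : ℝ[X] := ∏ j ∈ s, (X - C (b j))
  have hQdeg : Q.natDegree < m := by rw [natDegree_finsetProd_X_sub_C_eq_card, hs]; omega
  have hpair : ∑ i ∈ Finset.range m, Q.coeff i * S i = w j₀ * b j₀ * Q.eval (b j₀) := by
    simp only [S, pow_succ', ← mul_assoc]
    rw [sum_range_coeff_mul_sum_pow hQdeg, Finset.sum_eq_single j₀ _ (by simp)]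
    intro j _ hj
    rw [eval_prod, Finset.prod_eq_zero (Finset.mem_erase.2 ⟨hj, Finset.mem_univ j⟩) (by simp),
      mul_zero]
  have hQ : δ ^ (m - 1) ≤ |Q.eval (b j₀)| := by
    rw [eval_prod, Finset.abs_prod, ← hs, ← Finset.prod_const]
    exact Finset.prod_le_prod (fun _ _ => hδ) fun j hj => by
      simpa using hsep j (Finset.ne_of_mem_erase hj)
  have hcoeff : ∀ i, |Q.coeff i| ≤ (1 + R) ^ (m - 1) := fun i => calc
    _ ≤ ∏ j ∈ s, (1 + |b j|) := abs_coeff_prod_X_sub_C_le s b i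
    _ ≤ ∏ _j ∈ s, (1 + R) := Finset.prod_le_prod (fun _ _ => by positivity) fun j hj => by
        gcongr; exact hR j (Finset.ne_of_mem_erase hj)
    _ = (1 + R) ^ (m - 1) := by rw [Finset.prod_const, hs]
  obtain ⟨i, hi, hmax⟩ := (Finset.range m).exists_max_image (fun i => |S i|) ⟨0, by simpa⟩
  refine ⟨i, Finset.mem_range.1 hi, ?_⟩
  calc |w j₀ * b j₀| * δ ^ (m - 1) ≤ |w j₀ * b j₀ * Q.eval (b j₀)| := by
        rw [abs_mul _ (eval _ _)]; gcongr
    _ = |∑ k ∈ Finset.range m, Q.coeff k * S k| := by rw [hpair]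
    _ ≤ ∑ k ∈ Finset.range m, |Q.coeff k| * |S k| := by
        simpa only [abs_mul] using Finset.abs_sum_le_sum_abs (fun k => Q.coeff k * S k) _
    _ ≤ ∑ _k ∈ Finset.range m, (1 + R) ^ (m - 1) * |S i| := Finset.sum_le_sum fun k hk =>
        mul_le_mul (hcoeff k) (hmax k hk) (abs_nonneg (S k))
          ((abs_nonneg (Q.coeff 0)).trans (hcoeff 0))
    _ = m * (1 + R) ^ (m - 1) * |S i| := by
        rw [Finset.sum_const, Finset.card_range, nsmul_eq_mul, mul_assoc]

theorem iteratedDeriv_sum_mul_exp {ι : Type*} (s : Finset ι) (w b : ι → ℝ) (i : ℕ) :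
    iteratedDeriv i (fun β => ∑ j ∈ s, w j * Real.exp (β * b j)) =
      fun α => ∑ j ∈ s, w j * b j ^ i * Real.exp (α * b j) := by
  induction i with
  | zero => simp
  | succ i ih =>
    rw [iteratedDeriv_succ, ih]
    funext α
    have h : HasDerivAt (fun α => ∑ j ∈ s, w j * b j ^ i * Real.exp (α * b j))
        (∑ j ∈ s, w j * b j ^ i * (Real.exp (α * b j) * (1 * b j))) α :=
      HasDerivAt.fun_sum fun j _ =>
        ((Real.hasDerivAt_exp _).comp α ((hasDerivAt_id α).mul_const (b j))).const_mul _
    rw [h.deriv]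
    exact Finset.sum_congr rfl fun j _ => by ring

theorem tendsto_atTop_of_tendsto_div_log {a : ℕ → ℝ}
    (h : Tendsto (fun n : ℕ => a n / Real.log n) atTop atTop) : Tendsto a atTop atTop := by
  refine tendsto_atTop_mono' _ ?_ h
  filter_upwards [h.eventually_ge_atTop 0, eventually_ge_atTop 3] with n h0 h3
  have hlog : 1 ≤ Real.log n := by
    rw [Real.le_log_iff_exp_le (by positivity)]
    have : (3 : ℝ) ≤ n := by exact_mod_cast h3
    linarith [Real.exp_one_lt_d9]
  have ha : 0 ≤ a n := by
    have := mul_nonneg h0 (zero_le_one.trans hlog)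
    rwa [div_mul_cancel₀ _ (zero_lt_one.trans_le hlog).ne'] at this
  exact div_le_self ha hlog

theorem isBigO_rpow_exp_mul_of_tendsto_div_log {a : ℕ → ℝ}
    (h : Tendsto (fun n : ℕ => a n / Real.log n) atTop atTop) (M : ℝ) {b : ℝ} (hb : 0 < b) :
    (fun n : ℕ => (n : ℝ) ^ M) =O[atTop] fun n => Real.exp (b * a n) := by
  refine IsBigO.of_bound 1 ?_
  filter_upwards [h.eventually_ge_atTop (M / b), eventually_ge_atTop 2] with n hn h2
  have hlog : 0 < Real.log n := Real.log_pos (by exact_mod_cast h2)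
  rw [le_div_iff₀ hlog, div_mul_eq_mul_div, div_le_iff₀ hb] at hn
  rw [one_mul, Real.norm_of_nonneg (by positivity), Real.norm_of_nonneg (by positivity),
    Real.rpow_def_of_pos (by positivity)]
  exact Real.exp_le_exp.2 (by linarith)

theorem isBigO_one_add_pow_mul_exp (m : ℕ) {b : ℝ} (hb : 0 < b) :
    (fun x : ℝ => (1 + x) ^ m) =O[atTop] fun x => x * Real.exp (b * x) := by
  refine IsBigO.of_bound (2 ^ m) ?_
  filter_upwards [(isLittleO_pow_exp_pos_mul_atTop m hb).bound one_pos, eventually_ge_atTop 1]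
    with x hx h1
  rw [one_mul, Real.norm_of_nonneg (by positivity), Real.norm_of_nonneg (by positivity)] at hx
  rw [Real.norm_of_nonneg (by positivity), Real.norm_of_nonneg (by positivity)]
  calc (1 + x) ^ m ≤ (2 * x) ^ m := by gcongr; linarith
    _ = 2 ^ m * x ^ m := mul_pow _ _ _
    _ ≤ 2 ^ m * (x * Real.exp (b * x)) := by
        gcongr; exact hx.trans (le_mul_of_one_le_left (Real.exp_pos _).le h1)

theorem isBigO_rpow_neg_sub_pred {a : ℕ → ℝ} {C : ℝ} (hC : 0 < C)
    (hgap : ∀ᶠ n : ℕ in atTop, (n : ℝ) ^ (-C) ≤ a (n + 1) - a n) :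
    (fun n : ℕ => (n : ℝ) ^ (-C)) =O[atTop] fun n => a n - a (n - 1) := by
  refine IsBigO.of_bound 1 ?_
  filter_upwards [(tendsto_sub_atTop_nat 1).eventually hgap, eventually_ge_atTop 2] with n hn h2
  rw [Nat.sub_add_cancel (by omega)] at hn
  rw [one_mul, Real.norm_of_nonneg (by positivity)]
  refine le_trans ?_ (hn.trans (Real.le_norm_self _))
  exact Real.rpow_le_rpow_of_nonpos (by norm_cast; omega) (by norm_cast; omega) (by linarith)

theorem isBigO_rpow_mul_one_add_pow_of_tendsto_div_log {a : ℕ → ℝ}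
    (hgrowth : Tendsto (fun n : ℕ => a n / Real.log n) atTop atTop)
    (hgap : ∃ C : ℝ, 0 < C ∧ ∀ᶠ n : ℕ in atTop, (n : ℝ) ^ (-C) ≤ a (n + 1) - a n)
    (η : ℝ) {A : ℝ} (hA : 0 < A) (m : ℕ) :
    (fun n : ℕ => (n : ℝ) ^ η * (1 + a n) ^ m) =O[atTop]
      fun n => a n * (a n - a (n - 1)) ^ m * Real.exp (A * a n) := by
  obtain ⟨C, hC, hgap⟩ := hgap
  have hpow := isBigO_rpow_exp_mul_of_tendsto_div_log hgrowth (η + C * m) (half_pos hA)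
  have hpoly := (isBigO_one_add_pow_mul_exp m (half_pos hA)).comp_tendsto
    (tendsto_atTop_of_tendsto_div_log hgrowth)
  have hsep := (isBigO_rpow_neg_sub_pred hC hgap).pow m
  refine ((hpow.mul hpoly).mul hsep).congr' ?_ (Eventually.of_forall fun n => ?_)
  · filter_upwards [eventually_gt_atTop 0] with n hn
    have hn : (0 : ℝ) < n := by exact_mod_cast hn
    rw [mul_right_comm, ← Real.rpow_mul_natCast hn.le, ← Real.rpow_add hn]
    simp only [Function.comp_apply]
    congr 2
    ring
  · simp only [Function.comp_apply]
    rw [show A * a n = A / 2 * a n + A / 2 * a n by ring, Real.exp_add]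
    ring

theorem exists_pos_mul_le_of_isBigO {f g : ℕ → ℝ} (h : f =O[atTop] g) (hg : ∀ n ≠ 0, 0 < g n) :
    ∃ c > 0, ∀ n ≠ 0, c * f n ≤ g n := by
  obtain ⟨C, hC, hfg⟩ := bound_of_isBigO_nat_atTop h
  refine ⟨C⁻¹, inv_pos.2 hC, fun n hn => ?_⟩
  have hbound := hfg (hg n hn).ne'
  rw [Real.norm_of_nonneg (hg n hn).le] at hbound
  rw [inv_mul_le_iff₀ hC]
  exact (Real.le_norm_self _).trans hbound

theorem exists_abs_sum_mul_pow_mul_exp_ge {ι : Type*} [Fintype ι] [LinearOrder ι] {a : ℕ → ℝ}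
    (ha : StrictMono a) (hapos : ∀ n, 0 < a n) {u : ι → ℤ} (hu : ∀ j, u j ≠ 0) {t : ι → ℕ}
    (ht : StrictMono t) {L : ι} (hL : ∀ j, j ≤ L) {A α : ℝ} (hα : A ≤ α) :
    ∃ i < Fintype.card ι,
      a (t L) * (a (t L) - a (t L - 1)) ^ (Fintype.card ι - 1) * Real.exp (A * a (t L)) ≤
        Fintype.card ι * (1 + a (t L)) ^ (Fintype.card ι - 1) *
          |∑ j, (u j : ℝ) * a (t j) ^ (i + 1) * Real.exp (α * a (t j))| := by
  set n := t L
  have hbefore : ∀ j ≠ L, t j ≤ n - 1 := fun j hj => Nat.le_sub_one_of_lt (ht ((hL j).lt_of_ne hj))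
  have hgap : 0 ≤ a n - a (n - 1) := sub_nonneg.2 (ha.monotone (Nat.sub_le n 1))
  obtain ⟨i, hi, hle⟩ := exists_abs_sum_mul_pow_ge (fun j => (u j : ℝ) * Real.exp (α * a (t j)))
    (fun j => a (t j)) L hgap
    (fun j hj => (sub_le_sub_left (ha.monotone (hbefore j hj)) _).trans (le_abs_self _))
    (fun j hj => (abs_of_pos (hapos _)).trans_le
      (ha.monotone ((hbefore j hj).trans (Nat.sub_le n 1))))
  refine ⟨i, hi, le_trans ?_ (hle.trans_eq ?_)⟩
  · have hu1 : (1 : ℝ) ≤ |(u L : ℝ)| := by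
      rw [← Int.cast_abs]; exact_mod_cast Int.one_le_abs (hu L)
    have hweight : Real.exp (A * a n) ≤ |(u L : ℝ)| * Real.exp (α * a n) :=
      (Real.exp_le_exp.2 (by gcongr; exact (hapos n).le)).trans
        (le_mul_of_one_le_left (Real.exp_pos _).le hu1)
    rw [abs_mul, abs_mul, abs_of_pos (Real.exp_pos _), abs_of_pos (hapos n)]
    have := hapos n
    calc _ = Real.exp (A * a n) * a n * (a n - a (n - 1)) ^ (Fintype.card ι - 1) := by ring
      _ ≤ _ := by gcongr
  · congr 2
    exact Finset.sum_congr rfl fun j _ => by ring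

theorem stmt8 (a : ℕ → ℝ) (ha : StrictMono a) (hapos : ∀ n, 0 < a n)
    (hgrowth : Tendsto (fun n : ℕ => a n / Real.log n) atTop atTop)
    (hgap : ∃ C : ℝ, 0 < C ∧ ∀ᶠ n : ℕ in atTop, (n : ℝ) ^ (-C) ≤ a (n + 1) - a n)
    (A : ℝ) (hA : 0 < A) (η : ℝ) (hη : 0 < η)
    (ℓ : ℕ) (hℓ1 : 1 ≤ ℓ) :
    ∃ c : ℝ, 0 < c ∧ ∀ u : Fin ℓ → ℤ, (∀ i, u i ≠ 0) →
      ∀ t : Fin ℓ → ℕ, StrictMono t → ∀ α ∈ Icc A (A + 1),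
        ∃ i : ℕ, 1 ≤ i ∧ i ≤ ℓ ∧
          c * (t ⟨ℓ - 1, by omega⟩ : ℝ) ^ η ≤
            |iteratedDeriv i (fun β => ∑ j, (u j : ℝ) * Real.exp (β * a (t j))) α| := by
  obtain ⟨c, hc, hcg⟩ := exists_pos_mul_le_of_isBigO
    (isBigO_rpow_mul_one_add_pow_of_tendsto_div_log hgrowth hgap η hA (ℓ - 1)) fun n hn => by
      have := sub_pos.2 (ha (by omega : n - 1 < n)); have := hapos n; positivity
  refine ⟨c / ℓ, by positivity, fun u hu t ht α hα => ?_⟩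
  set n := t ⟨ℓ - 1, by omega⟩
  obtain ⟨i, hi, hle⟩ := exists_abs_sum_mul_pow_mul_exp_ge ha hapos hu ht
    (L := ⟨ℓ - 1, by omega⟩) (fun j => Fin.le_def.2 (Nat.le_sub_one_of_lt j.isLt)) hα.1
  rw [Fintype.card_fin] at hi hle
  refine ⟨i + 1, by omega, by omega, ?_⟩
  have han := hapos n
  rw [iteratedDeriv_sum_mul_exp, div_mul_eq_mul_div, div_le_iff₀ (by positivity)]
  refine le_of_mul_le_mul_right ?_ (by positivity : (0 : ℝ) < (1 + a n) ^ (ℓ - 1))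
  rcases eq_or_ne n 0 with hn | hn
  · rw [show (n : ℝ) ^ η = 0 by rw [hn, Nat.cast_zero, Real.zero_rpow hη.ne'], mul_zero, zero_mul]
    positivity
  · calc c * (n : ℝ) ^ η * (1 + a n) ^ (ℓ - 1) ≤ _ := by rw [mul_assoc]; exact hcg n hn
      _ ≤ _ := hle
      _ = _ := by ring
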